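/- The skewed bivariate Birnbaum–Saunders density f(t₁,t₂) = 2·φ(a₁)·φ(a₂)·Φ(λa₁a₂)·∏_{j=1,2} [t_j^{-3/2}(t_j+β_j)/(2α_j√β_j)] integrates to 1 over (0,∞)², where a_j = (1/α_j)(√(t_j/β_j) − √(β_j/t_j)). -/

import Mathlib

open Real MeasureTheory

/-- Standard normal pdf. -/
noncomputable def phi (x : ℝ) : ℝ := (Real.sqrt (2 * Real.pi))⁻¹ * Real.exp (-x ^ 2 / 2)

/-- Standard normal cdf. -/
noncomputable def Phi (x : ℝ) : ℝ := ∫ t in Set.Iic x, phi t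

noncomputable def aj (a b t : ℝ) : ℝ := (1/a) * (Real.sqrt (t / b) - Real.sqrt (b / t))

/-- Skewed bivariate Birnbaum–Saunders density. -/
noncomputable def fSBVBS (a1 a2 b1 b2 l t1 t2 : ℝ) : ℝ :=
  2 * phi (aj a1 b1 t1) * phi (aj a2 b2 t2) * Phi (l * (aj a1 b1 t1) * (aj a2 b2 t2)) *
    (t1 ^ (-(3:ℝ)/2) * (t1 + b1) / (2 * a1 * Real.sqrt b1)) *
    (t2 ^ (-(3:ℝ)/2) * (t2 + b2) / (2 * a2 * Real.sqrt b2))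

/-!
Both `a_j` are increasing bijections of `(0, ∞)` onto `ℝ`, and the factor
`t^{-3/2} (t + β) / (2 α √β)` of the density is exactly `a_j'(t)`. Substituting
`x = a₁(t₁)`, `y = a₂(t₂)` therefore turns the integral into that of
`2 φ(x) φ(y) Φ(λxy)` over `ℝ²`. Reflecting `x ↦ -x` preserves `φ(x) φ(y)` and sends `Φ(λxy)`
to `1 - Φ(λxy)`, so this integral `I` satisfies `I = 2 - I`.
-/

open ProbabilityTheory Set

lemma phi_eq_gaussianPDFReal : phi = gaussianPDFReal 0 1 := by
  ext x
  simp [phi, gaussianPDFReal_def]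

lemma phi_pos (x : ℝ) : 0 < phi x := by
  rw [phi_eq_gaussianPDFReal]
  exact gaussianPDFReal_pos 0 1 x one_ne_zero

lemma phi_neg (x : ℝ) : phi (-x) = phi x := by
  simp [phi]

lemma continuous_phi : Continuous phi := by
  unfold phi; fun_prop

lemma integrable_phi : Integrable phi := by
  rw [phi_eq_gaussianPDFReal]
  exact integrable_gaussianPDFReal 0 1

lemma integral_phi : ∫ x, phi x = 1 := by
  rw [phi_eq_gaussianPDFReal]
  exact integral_gaussianPDFReal_eq_one 0 one_ne_zero

lemma Phi_nonneg (x : ℝ) : 0 ≤ Phi x :=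
  setIntegral_nonneg measurableSet_Iic fun t _ => (phi_pos t).le

lemma Phi_le_one (x : ℝ) : Phi x ≤ 1 :=
  integral_phi ▸ setIntegral_le_integral integrable_phi (.of_forall fun t => (phi_pos t).le)

lemma measurable_Phi : Measurable Phi := by
  refine Monotone.measurable fun x y hxy => ?_
  exact setIntegral_mono_set integrable_phi.integrableOn (.of_forall fun t => (phi_pos t).le)
    (Iic_subset_Iic.2 hxy).eventuallyLE

lemma Phi_neg (x : ℝ) : Phi (-x) = 1 - Phi x := by
  have h_tail : Phi (-x) = ∫ t in Ioi x, phi t := by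
    rw [Phi, ← neg_neg x, ← integral_comp_neg_Iic, neg_neg]
    simp only [phi_neg]
  rw [h_tail, ← integral_phi, ← intervalIntegral.integral_Iic_add_Ioi
    integrable_phi.integrableOn integrable_phi.integrableOn, Phi]
  ring

noncomputable def ajDeriv (a b t : ℝ) : ℝ := t ^ (-(3:ℝ)/2) * (t + b) / (2 * a * √b)

lemma measurable_aj (a b : ℝ) : Measurable (aj a b) := by
  unfold aj; fun_prop

lemma measurable_ajDeriv (a b : ℝ) : Measurable (ajDeriv a b) := by
  unfold ajDeriv; fun_prop

lemma ajDeriv_pos {a b t : ℝ} (ha : 0 < a) (hb : 0 < b) (ht : 0 < t) : 0 < ajDeriv a b t := by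
  have := rpow_pos_of_pos ht (-(3:ℝ)/2)
  have := sqrt_pos.2 hb
  unfold ajDeriv; positivity

lemma rpow_neg_three_halves {t : ℝ} (ht : 0 < t) : t ^ (-(3:ℝ)/2) = (t * √t)⁻¹ := by
  rw [show (-(3:ℝ)/2) = -(1 + 1/2) by norm_num, rpow_neg ht.le, rpow_add ht, rpow_one,
    ← sqrt_eq_rpow]

lemma hasDerivAt_aj (a : ℝ) {b t : ℝ} (hb : 0 < b) (ht : 0 < t) :
    HasDerivAt (aj a b) (ajDeriv a b t) t := by
  have hst : 0 < √t := sqrt_pos.2 ht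
  have hsb : 0 < √b := sqrt_pos.2 hb
  have h_sqrt : HasDerivAt sqrt (1 / (2 * √t)) t := hasDerivAt_sqrt ht.ne'
  have h_eq : (fun s => (1/a) * (√s / √b - √b * (√s)⁻¹)) =ᶠ[nhds t] aj a b := by
    filter_upwards [eventually_gt_nhds ht] with s hs
    rw [aj, sqrt_div hs.le, sqrt_div hb.le, div_eq_mul_inv √b]
  refine (((h_sqrt.div_const √b).sub ((h_sqrt.inv hst.ne').const_mul √b)).const_mul
    (1/a)).congr_of_eventuallyEq h_eq.symm |>.congr_deriv ?_
  rcases eq_or_ne a 0 with rfl | ha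
  · simp [ajDeriv]
  rw [ajDeriv, rpow_neg_three_halves ht]
  field_simp
  linear_combination t * sq_sqrt hb.le - b * sq_sqrt ht.le

lemma aj_strictMonoOn {a b : ℝ} (ha : 0 < a) (hb : 0 < b) : StrictMonoOn (aj a b) (Ioi 0) := by
  refine strictMonoOn_of_deriv_pos (convex_Ioi 0)
    (fun t ht => (hasDerivAt_aj a hb ht).continuousAt.continuousWithinAt) fun t ht => ?_
  rw [interior_Ioi] at ht
  rw [(hasDerivAt_aj a hb ht).deriv]
  exact ajDeriv_pos ha hb ht

lemma aj_mul_sq {a b s : ℝ} (hb : 0 < b) (hs : 0 < s) : aj a b (b * s ^ 2) = (s - s⁻¹) / a := by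
  rw [aj, mul_div_cancel_left₀ _ hb.ne', div_mul_cancel_left₀ hb.ne', sqrt_inv,
    sqrt_sq hs.le, one_div_mul_eq_div]

lemma exists_pos_sub_inv_eq (y : ℝ) : ∃ s > 0, s - s⁻¹ = y := by
  set r := √(y ^ 2 + 4)
  have h_sq : r ^ 2 = y ^ 2 + 4 := sq_sqrt (by positivity)
  have h_gt : |y| < r := by
    rw [← sqrt_sq_eq_abs]
    exact sqrt_lt_sqrt (sq_nonneg y) (by linarith)
  have h_inv : ((y + r) / 2)⁻¹ = (r - y) / 2 :=
    inv_eq_of_mul_eq_one_right (by linear_combination h_sq / 4)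
  exact ⟨(y + r) / 2, by linarith [neg_abs_le y], by rw [h_inv]; ring⟩

lemma aj_image_Ioi {a b : ℝ} (ha : a ≠ 0) (hb : 0 < b) : aj a b '' Ioi 0 = univ := by
  refine eq_univ_of_forall fun x => ?_
  obtain ⟨s, hs, hsx⟩ := exists_pos_sub_inv_eq (a * x)
  refine ⟨b * s ^ 2, mul_pos hb (pow_pos hs 2), ?_⟩
  rw [aj_mul_sq hb hs, hsx, mul_div_cancel_left₀ x ha]

lemma measurePreserving_withDensity_of_hasDerivWithinAt {f f' : ℝ → ℝ} {s : Set ℝ}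
    (hs : MeasurableSet s) (hf : Measurable f) (hf' : ∀ x ∈ s, HasDerivWithinAt f (f' x) s x)
    (hf'_nonneg : ∀ x ∈ s, 0 ≤ f' x) (hinj : InjOn f s) (himage : f '' s = univ) :
    MeasurePreserving f ((volume.restrict s).withDensity fun x => ENNReal.ofReal (f' x))
      volume := by
  refine ⟨hf, ?_⟩
  have h := map_withDensity_abs_det_fderiv_eq_addHaar volume hs.nullMeasurableSet
    (fun x hx => (hf' x hx).hasFDerivWithinAt) hinj
  simp only [ContinuousLinearMap.det_toSpanSingleton, himage, Measure.restrict_univ] at h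
  rwa [withDensity_congr_ae (ae_restrict_of_forall_mem hs fun x hx => by
    rw [abs_of_nonneg (hf'_nonneg x hx)])] at h

lemma measurePreserving_aj {a b : ℝ} (ha : 0 < a) (hb : 0 < b) :
    MeasurePreserving (aj a b)
      ((volume.restrict (Ioi 0)).withDensity fun t => ENNReal.ofReal (ajDeriv a b t)) volume :=
  measurePreserving_withDensity_of_hasDerivWithinAt measurableSet_Ioi (measurable_aj a b)
    (fun _ ht => (hasDerivAt_aj a hb ht).hasDerivWithinAt)
    (fun _ ht => (ajDeriv_pos ha hb ht).le) (aj_strictMonoOn ha hb).injOn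
    (aj_image_Ioi ha.ne' hb)

lemma setIntegral_prod_mul_comp_eq_integral {f g f' g' : ℝ → ℝ} {s t : Set ℝ}
    (hs : MeasurableSet s) (ht : MeasurableSet t) (hf' : Measurable f') (hg' : Measurable g')
    (hf'_nonneg : ∀ x ∈ s, 0 ≤ f' x) (hg'_nonneg : ∀ y ∈ t, 0 ≤ g' y)
    (hf : MeasurePreserving f ((volume.restrict s).withDensity fun x => ENNReal.ofReal (f' x))
      volume)
    (hg : MeasurePreserving g ((volume.restrict t).withDensity fun y => ENNReal.ofReal (g' y))
      volume)
    {F : ℝ × ℝ → ℝ} (hF : AEStronglyMeasurable F volume) :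
    ∫ p in s ×ˢ t, f' p.1 * g' p.2 * F (f p.1, g p.2) = ∫ q, F q := by
  have hfg := hf.prod hg
  rw [prod_withDensity hf'.ennreal_ofReal hg'.ennreal_ofReal, Measure.prod_restrict,
    ← Measure.volume_eq_prod] at hfg
  have h_map := integral_map hfg.aemeasurable (hfg.map_eq.symm ▸ hF)
  rw [hfg.map_eq, integral_withDensity_eq_integral_toReal_smul (by fun_prop)
    (.of_forall fun _ => ENNReal.mul_lt_top ENNReal.ofReal_lt_top ENNReal.ofReal_lt_top)] at h_map
  rw [h_map]
  refine setIntegral_congr_fun (hs.prod ht) fun p ⟨hp₁, hp₂⟩ => ?_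
  rw [ENNReal.toReal_mul, ENNReal.toReal_ofReal (hf'_nonneg _ hp₁),
    ENNReal.toReal_ofReal (hg'_nonneg _ hp₂), smul_eq_mul, Prod.map_apply]

/-- Azzalini's lemma on skew-symmetric perturbations of a symmetric density. -/
lemma two_mul_integral_mul_eq_integral {α : Type*} [MeasurableSpace α] {μ : Measure α}
    {σ : α ≃ᵐ α} (hσ : MeasurePreserving σ μ μ) {f w : α → ℝ} (hf : Integrable f μ)
    (hfw : Integrable (fun x => f x * w x) μ) (hfσ : ∀ x, f (σ x) = f x)
    (hwσ : ∀ x, w (σ x) = 1 - w x) :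
    2 * ∫ x, f x * w x ∂μ = ∫ x, f x ∂μ := by
  have h := hσ.integral_comp' fun x => f x * w x
  simp only [hfσ, hwσ, mul_sub, mul_one] at h
  rw [integral_sub hf hfw] at h
  linarith

noncomputable def skewPDF (l : ℝ) (q : ℝ × ℝ) : ℝ := 2 * phi q.1 * phi q.2 * Phi (l * q.1 * q.2)

lemma measurable_skewPDF (l : ℝ) : Measurable (skewPDF l) := by
  have := continuous_phi.measurable
  have := measurable_Phi
  unfold skewPDF; fun_prop

lemma integral_skewPDF (l : ℝ) : ∫ q, skewPDF l q = 1 := by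
  set f : ℝ × ℝ → ℝ := fun q => phi q.1 * phi q.2
  set w : ℝ × ℝ → ℝ := fun q => Phi (l * q.1 * q.2)
  have hf : Integrable f := integrable_phi.mul_prod integrable_phi
  have hfw : Integrable (fun q => f q * w q) :=
    hf.mul_bdd (measurable_Phi.comp (by fun_prop)).aestronglyMeasurable
      (c := 1) (.of_forall fun q => by
        rw [norm_of_nonneg (Phi_nonneg _)]
        exact Phi_le_one _)
  have h_reflect : MeasurePreserving ((MeasurableEquiv.neg ℝ).prodCongr (MeasurableEquiv.refl ℝ))
      volume volume :=
    (Measure.measurePreserving_neg volume).prod (MeasurePreserving.id volume)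
  have h_half := two_mul_integral_mul_eq_integral h_reflect hf hfw
    (fun ⟨x, y⟩ => show phi (-x) * phi y = phi x * phi y by rw [phi_neg])
    (fun ⟨x, y⟩ => show Phi (l * -x * y) = 1 - Phi (l * x * y) by rw [← Phi_neg]; ring_nf)
  rw [Measure.volume_eq_prod, integral_prod_mul, integral_phi, mul_one,
    ← Measure.volume_eq_prod] at h_half
  rw [← h_half, ← integral_const_mul]
  simp only [skewPDF, f, w, mul_assoc]

lemma fSBVBS_eq (a1 a2 b1 b2 l t1 t2 : ℝ) :
    fSBVBS a1 a2 b1 b2 l t1 t2 =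
      ajDeriv a1 b1 t1 * ajDeriv a2 b2 t2 * skewPDF l (aj a1 b1 t1, aj a2 b2 t2) := by
  rw [fSBVBS, ajDeriv, ajDeriv, skewPDF]
  ring

theorem SBVBS_integrates_to_one (a1 a2 b1 b2 l : ℝ)
    (ha1 : 0 < a1) (ha2 : 0 < a2) (hb1 : 0 < b1) (hb2 : 0 < b2) :
    ∫ p in Set.Ioi (0:ℝ) ×ˢ Set.Ioi (0:ℝ), fSBVBS a1 a2 b1 b2 l p.1 p.2 = 1 := by
  simp only [fSBVBS_eq]
  rw [setIntegral_prod_mul_comp_eq_integral measurableSet_Ioi measurableSet_Ioi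
    (measurable_ajDeriv a1 b1) (measurable_ajDeriv a2 b2)
    (fun _ ht => (ajDeriv_pos ha1 hb1 ht).le) (fun _ ht => (ajDeriv_pos ha2 hb2 ht).le)
    (measurePreserving_aj ha1 hb1) (measurePreserving_aj ha2 hb2)
    (measurable_skewPDF l).aestronglyMeasurable]
  exact integral_skewPDF l
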